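/- Under the stated setup, if |λ₁| > |λ₂| then lim_{h→∞} CD⁻(h)/λ₁ʰ = α·D₁; equivalently, the cross-codifference CD(X₁(t),X₂(t−h)) is asymptotically α·D₁·λ₁ʰ as h → ∞. -/

import Mathlib

open MeasureTheory Filter Topology

/-- The signed power `x^⟨p⟩ = |x|^p · sign x`. -/
noncomputable def spow (x p : ℝ) : ℝ := |x| ^ p * Real.sign x

/-- The unit sphere `S₂ ⊆ ℝ²`. -/
abbrev Sphere2 : Type := {s : ℝ × ℝ // s.1 ^ 2 + s.2 ^ 2 = 1}

noncomputable def A1 (a1 a2 a3 a4 l1 l2 : ℝ) (j : ℕ) (s : Sphere2) : ℝ :=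
  (l2 * l1 ^ j * s.1.1 - l1 ^ j * a1 * s.1.1 - l1 ^ j * a2 * s.1.2) / (l2 - l1)

noncomputable def B1 (a1 a2 a3 a4 l1 l2 : ℝ) (j : ℕ) (s : Sphere2) : ℝ :=
  (-(l1 * l2 ^ j * s.1.1) + l2 ^ j * a1 * s.1.1 + l2 ^ j * a2 * s.1.2) / (l2 - l1)

noncomputable def C1 (a1 a2 a3 a4 l1 l2 : ℝ) (j : ℕ) (s : Sphere2) : ℝ :=
  (l1 ^ j * (-(a3 * s.1.1) + l2 * s.1.2 - a4 * s.1.2)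
    + l2 ^ j * (a3 * s.1.1 - l1 * s.1.2 + a4 * s.1.2)) / (l2 - l1)

/- ### Auxiliary lemmas about `spow` -/

lemma spow_of_nonneg {x : ℝ} (hx : 0 ≤ x) {p : ℝ} (hp : 0 < p) : spow x p = x ^ p := by
  rcases hx.eq_or_lt with rfl | h
  · simp [spow, Real.zero_rpow hp.ne']
  · simp [spow, Real.sign_of_pos h, abs_of_pos h]

lemma spow_neg' (x p : ℝ) : spow (-x) p = - spow x p := by
  simp [spow, Real.sign_neg, mul_neg]

lemma spow_of_nonpos {x : ℝ} (hx : x ≤ 0) {p : ℝ} (hp : 0 < p) : spow x p = -((-x) ^ p) := by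
  have h := spow_neg' (-x) p
  rw [neg_neg] at h
  rw [h, spow_of_nonneg (by linarith : (0:ℝ) ≤ -x) hp]

lemma abs_spow_le (x q : ℝ) : |spow x q| ≤ |x| ^ q := by
  rw [spow, abs_mul, abs_of_nonneg (Real.rpow_nonneg (abs_nonneg x) q)]
  have h : |Real.sign x| ≤ 1 := by
    rcases lt_trichotomy x 0 with h | rfl | h <;>
      simp [Real.sign_of_neg, Real.sign_of_pos, *]
  calc |x| ^ q * |Real.sign x| ≤ |x| ^ q * 1 :=
        mul_le_mul_of_nonneg_left h (Real.rpow_nonneg (abs_nonneg x) q)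
    _ = |x| ^ q := mul_one _

lemma rpow_sub_rpow_le {p : ℝ} (hp0 : 0 < p) (hp1 : p ≤ 1) {u v : ℝ} (hu : 0 ≤ u) (huv : u ≤ v) :
    v ^ p - u ^ p ≤ (v - u) ^ p := by
  have hvu : (0:ℝ) ≤ v - u := by linarith
  have hv : (0:ℝ) ≤ v := by linarith
  have h2 := NNReal.rpow_add_le_add_rpow (Real.toNNReal (v - u)) (Real.toNNReal u) hp0.le hp1
  have h3 : Real.toNNReal (v - u) + Real.toNNReal u = Real.toNNReal v := by
    rw [← Real.toNNReal_add hvu hu]; congr 1; ring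
  rw [h3] at h2
  have h4 := NNReal.coe_le_coe.2 h2
  rw [NNReal.coe_add, NNReal.coe_rpow, NNReal.coe_rpow, NNReal.coe_rpow,
    Real.coe_toNNReal _ hvu, Real.coe_toNNReal _ hu, Real.coe_toNNReal _ hv] at h4
  linarith

lemma spow_sub_spow_abs_le {p : ℝ} (hp0 : 0 < p) (hp1 : p ≤ 1) (u v : ℝ) :
    |spow v p - spow u p| ≤ 2 * |v - u| ^ p := by
  suffices H : ∀ u v : ℝ, u ≤ v → |spow v p - spow u p| ≤ 2 * |v - u| ^ p by
    rcases le_total u v with h | h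
    · exact H u v h
    · calc |spow v p - spow u p| = |spow u p - spow v p| := abs_sub_comm _ _
        _ ≤ 2 * |u - v| ^ p := H v u h
        _ = 2 * |v - u| ^ p := by rw [abs_sub_comm]
  intro u v huv
  have hvu : (0:ℝ) ≤ v - u := by linarith
  rw [abs_of_nonneg hvu]
  rcases le_or_gt 0 u with hu | hu
  · rw [spow_of_nonneg hu hp0, spow_of_nonneg (hu.trans huv) hp0]
    have h1 := rpow_sub_rpow_le hp0 hp1 hu huv
    have h2 : u ^ p ≤ v ^ p := Real.rpow_le_rpow hu huv hp0.le
    have h3 : (0:ℝ) ≤ (v - u) ^ p := Real.rpow_nonneg hvu p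
    rw [abs_of_nonneg (by linarith)]
    linarith
  · rcases le_or_gt v 0 with hv | hv
    · rw [spow_of_nonpos hu.le hp0, spow_of_nonpos hv hp0]
      have h1 := rpow_sub_rpow_le hp0 hp1 (neg_nonneg.2 hv) (by linarith : -v ≤ -u)
      have h2 : (-v) ^ p ≤ (-u) ^ p :=
        Real.rpow_le_rpow (neg_nonneg.2 hv) (by linarith) hp0.le
      have h3 : (0:ℝ) ≤ (v - u) ^ p := Real.rpow_nonneg hvu p
      rw [show -((-v) ^ p) - -((-u) ^ p) = (-u) ^ p - (-v) ^ p from by ring,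
        abs_of_nonneg (by linarith)]
      rw [show -u - -v = v - u from by ring] at h1
      linarith
    · rw [spow_of_nonpos hu.le hp0, spow_of_nonneg hv.le hp0]
      have h1 : v ^ p ≤ (v - u) ^ p := Real.rpow_le_rpow hv.le (by linarith) hp0.le
      have h2 : (-u) ^ p ≤ (v - u) ^ p :=
        Real.rpow_le_rpow (by linarith) (by linarith) hp0.le
      have h3 : (0:ℝ) ≤ v ^ p := Real.rpow_nonneg hv.le p
      have h4 : (0:ℝ) ≤ (-u) ^ p := Real.rpow_nonneg (by linarith) p
      rw [show v ^ p - -((-u) ^ p) = v ^ p + (-u) ^ p from by ring,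
        abs_of_nonneg (by linarith)]
      linarith

lemma continuous_abs_rpow {q : ℝ} (hq : 0 ≤ q) : Continuous fun x : ℝ => |x| ^ q := by
  rw [continuous_iff_continuousAt]
  intro x
  exact (Real.continuousAt_rpow_const |x| q (Or.inr hq)).comp continuous_abs.continuousAt

lemma hasDerivAt_abs_rpow' {p : ℝ} (hp : 1 < p) (t : ℝ) :
    HasDerivAt (fun x : ℝ => |x| ^ p) (p * spow t (p - 1)) t := by
  have hp0 : (0:ℝ) < p - 1 := by linarith
  rcases lt_trichotomy t 0 with ht | rfl | ht
  · have h1 : HasDerivAt (fun x : ℝ => (-x) ^ p) (p * (-t) ^ (p - 1) * (-1)) t :=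
      (Real.hasDerivAt_rpow_const (x := -t) (p := p)
        (Or.inl (by simp [ht.ne] : -t ≠ 0))).comp t (hasDerivAt_neg t)
    have h2 : (fun x : ℝ => |x| ^ p) =ᶠ[𝓝 t] fun x : ℝ => (-x) ^ p := by
      filter_upwards [gt_mem_nhds ht] with x hx
      rw [abs_of_neg hx]
    have h3 := h1.congr_of_eventuallyEq h2
    have h4 : p * (-t) ^ (p - 1) * (-1) = p * spow t (p - 1) := by
      rw [spow_of_nonpos ht.le hp0]; ring
    rwa [h4] at h3
  · have hval : p * spow 0 (p - 1) = 0 := by simp [spow]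
    rw [hval, hasDerivAt_iff_tendsto_slope]
    have key : Tendsto (fun x : ℝ => |x| ^ (p - 1)) (𝓝[≠] (0:ℝ)) (𝓝 0) := by
      have c1 : ContinuousAt (fun y : ℝ => y ^ (p - 1)) |(0:ℝ)| :=
        Real.continuousAt_rpow_const |(0:ℝ)| (p - 1) (Or.inr hp0.le)
      have c2 : Tendsto (fun x : ℝ => |x| ^ (p - 1)) (𝓝 0) (𝓝 (|(0:ℝ)| ^ (p - 1))) :=
        c1.comp continuous_abs.continuousAt
      rw [abs_zero, Real.zero_rpow hp0.ne'] at c2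
      exact c2.mono_left nhdsWithin_le_nhds
    refine squeeze_zero_norm' ?_ key
    filter_upwards [self_mem_nhdsWithin] with x hx
    have hx0 : (x:ℝ) ≠ 0 := hx
    have h5 : slope (fun x : ℝ => |x| ^ p) 0 x = |x| ^ p / x := by
      simp [slope_def_field, Real.zero_rpow (by linarith : p ≠ 0)]
    rw [h5, Real.norm_eq_abs, abs_div, abs_of_nonneg (Real.rpow_nonneg (abs_nonneg x) p),
      ← Real.rpow_sub_one (abs_ne_zero.2 hx0)]
  · have h1 : HasDerivAt (fun x : ℝ => x ^ p) (p * t ^ (p - 1)) t :=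
      Real.hasDerivAt_rpow_const (Or.inl ht.ne')
    have h2 : (fun x : ℝ => |x| ^ p) =ᶠ[𝓝 t] fun x : ℝ => x ^ p := by
      filter_upwards [lt_mem_nhds ht] with x hx
      rw [abs_of_pos hx]
    have h3 := h1.congr_of_eventuallyEq h2
    rwa [← spow_of_nonneg ht.le hp0] at h3

lemma exists_xi {p : ℝ} (hp : 1 < p) (c x : ℝ) (hx : x ≠ 0) :
    ∃ ξ : ℝ, |ξ - c| ≤ |x| ∧ |c| ^ p - |c - x| ^ p = p * spow ξ (p - 1) * x := by
  have hcont : Continuous fun y : ℝ => |y| ^ p :=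
    continuous_iff_continuousAt.2 fun y => (hasDerivAt_abs_rpow' hp y).continuousAt
  rcases hx.lt_or_gt with hxneg | hxpos
  · obtain ⟨ξ, hξ, hval⟩ := exists_hasDerivAt_eq_slope (fun y : ℝ => |y| ^ p)
      (fun y => p * spow y (p - 1)) (by linarith : c < c - x) hcont.continuousOn
      (fun y _ => hasDerivAt_abs_rpow' hp y)
    refine ⟨ξ, ?_, ?_⟩
    · rw [abs_le, abs_of_neg hxneg]
      exact ⟨by linarith [hξ.1], by linarith [hξ.2]⟩
    · rw [eq_div_iff (show (c - x) - c ≠ 0 by intro h; apply hx; linarith [sub_eq_zero.1 h])] at hval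
      linear_combination hval
  · obtain ⟨ξ, hξ, hval⟩ := exists_hasDerivAt_eq_slope (fun y : ℝ => |y| ^ p)
      (fun y => p * spow y (p - 1)) (by linarith : c - x < c) hcont.continuousOn
      (fun y _ => hasDerivAt_abs_rpow' hp y)
    refine ⟨ξ, ?_, ?_⟩
    · rw [abs_le, abs_of_pos hxpos]
      exact ⟨by linarith [hξ.1], by linarith [hξ.2]⟩
    · rw [eq_div_iff (show c - (c - x) ≠ 0 by intro h; apply hx; linarith [sub_eq_zero.1 h])] at hval
      linear_combination -hval

lemma key_ineq {p : ℝ} (hp1 : 1 < p) (hp2 : p ≤ 2) (c x : ℝ) :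
    abs (|c| ^ p - |c - x| ^ p - p * spow c (p - 1) * x) ≤ 2 * p * |x| ^ p := by
  have hp0 : (0:ℝ) < p - 1 := by linarith
  have hβ1 : p - 1 ≤ 1 := by linarith
  rcases eq_or_ne x 0 with rfl | hx
  · simp [Real.zero_rpow (by linarith : p ≠ 0)]
  · obtain ⟨ξ, hξ1, hξ2⟩ := exists_xi hp1 c x hx
    rw [hξ2, show p * spow ξ (p-1) * x - p * spow c (p-1) * x
        = p * x * (spow ξ (p-1) - spow c (p-1)) from by ring]
    have hnn : (0:ℝ) ≤ p * |x| := mul_nonneg (by linarith) (abs_nonneg x)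
    calc |p * x * (spow ξ (p-1) - spow c (p-1))|
        = p * |x| * |spow ξ (p-1) - spow c (p-1)| := by
          rw [abs_mul, abs_mul, abs_of_pos (by linarith : (0:ℝ) < p)]
      _ ≤ p * |x| * (2 * |ξ - c| ^ (p-1)) :=
          mul_le_mul_of_nonneg_left (spow_sub_spow_abs_le hp0 hβ1 _ _) hnn
      _ ≤ p * |x| * (2 * |x| ^ (p-1)) := by
          have h6 := Real.rpow_le_rpow (abs_nonneg (ξ - c)) hξ1 hp0.le
          exact mul_le_mul_of_nonneg_left (by linarith) hnn
      _ = 2 * p * (|x| ^ (p-1) * |x|) := by ring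
      _ = 2 * p * |x| ^ (p - 1 + 1) := by rw [Real.rpow_add_one (abs_ne_zero.2 hx)]
      _ = 2 * p * |x| ^ p := by norm_num

lemma pow_rpow_comm {x : ℝ} (hx : 0 ≤ x) (n : ℕ) (q : ℝ) : (x ^ n) ^ q = (x ^ q) ^ n := by
  rw [← Real.rpow_natCast x n, ← Real.rpow_mul hx, mul_comm, Real.rpow_mul hx,
    Real.rpow_natCast]

lemma measurable_rsign : Measurable Real.sign := by
  have h : Real.sign = fun r : ℝ => if r < 0 then (-1:ℝ) else if 0 < r then 1 else 0 :=
    funext fun r => rfl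
  rw [h]
  exact Measurable.ite (measurableSet_lt measurable_id measurable_const) measurable_const
    (Measurable.ite (measurableSet_lt measurable_const measurable_id) measurable_const
      measurable_const)

lemma abs_lin3 {p q r u v w : ℝ} (hu : |u| ≤ 1) (hv : |v| ≤ 1) (hw : |w| ≤ 1) :
    |p * u + q * v + r * w| ≤ |p| + |q| + |r| := by
  calc |p * u + q * v + r * w| ≤ |p * u| + |q * v| + |r * w| := abs_add_three _ _ _
    _ ≤ |p| * 1 + |q| * 1 + |r| * 1 := by
        rw [abs_mul, abs_mul, abs_mul]
        gcongr <;> assumption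
    _ = |p| + |q| + |r| := by ring

lemma sphere_abs_fst (s : Sphere2) : |s.1.1| ≤ 1 := by
  have h := s.2
  nlinarith [sq_abs s.1.1, abs_nonneg s.1.1, sq_nonneg s.1.2]

lemma sphere_abs_snd (s : Sphere2) : |s.1.2| ≤ 1 := by
  have h := s.2
  nlinarith [sq_abs s.1.2, abs_nonneg s.1.2, sq_nonneg s.1.1]

/-- A convenient constant dominating `A1`, `B1`, `C1`. -/
noncomputable def Kc (a1 a2 a3 a4 l1 l2 : ℝ) : ℝ :=
  (2 * (|l1| + |l2| + |a1| + |a2| + |a3| + |a4|) + 2) / |l2 - l1|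

lemma Kc_pos (a1 a2 a3 a4 : ℝ) {l1 l2 : ℝ} (h : l1 ≠ l2) : 0 < Kc a1 a2 a3 a4 l1 l2 :=
  div_pos (by positivity) (abs_pos.2 (sub_ne_zero.2 (Ne.symm h)))

lemma abs_A1_le (a1 a2 a3 a4 : ℝ) {l1 l2 : ℝ} (h : l1 ≠ l2) (j : ℕ) (s : Sphere2) :
    |A1 a1 a2 a3 a4 l1 l2 j s| ≤ Kc a1 a2 a3 a4 l1 l2 * |l1| ^ j := by
  have hd : (0:ℝ) < |l2 - l1| := abs_pos.2 (sub_ne_zero.2 (Ne.symm h))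
  have e : A1 a1 a2 a3 a4 l1 l2 j s
      = l1 ^ j * (l2 * s.1.1 + (-a1) * s.1.1 + (-a2) * s.1.2) / (l2 - l1) := by
    rw [A1]; ring
  have hinner : |l2 * s.1.1 + (-a1) * s.1.1 + (-a2) * s.1.2| ≤ |l2| + |a1| + |a2| := by
    simpa [abs_neg] using abs_lin3 (p := l2) (q := -a1) (r := -a2)
      (sphere_abs_fst s) (sphere_abs_fst s) (sphere_abs_snd s)
  have hX : |l1| ^ j * |l2 * s.1.1 + (-a1) * s.1.1 + (-a2) * s.1.2|
      ≤ (2 * (|l1| + |l2| + |a1| + |a2| + |a3| + |a4|) + 2) * |l1| ^ j := by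
    have h1 : |l2| + |a1| + |a2| ≤ 2 * (|l1| + |l2| + |a1| + |a2| + |a3| + |a4|) + 2 := by
      have := abs_nonneg l1; have := abs_nonneg l2; have := abs_nonneg a1
      have := abs_nonneg a2; have := abs_nonneg a3; have := abs_nonneg a4
      linarith
    calc |l1| ^ j * |l2 * s.1.1 + (-a1) * s.1.1 + (-a2) * s.1.2|
        ≤ |l1| ^ j * (2 * (|l1| + |l2| + |a1| + |a2| + |a3| + |a4|) + 2) :=
          mul_le_mul_of_nonneg_left (hinner.trans h1) (by positivity)
      _ = _ := mul_comm _ _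
  rw [e, abs_div, abs_mul, abs_pow, Kc, div_mul_eq_mul_div, div_le_div_iff₀ hd hd]
  nlinarith [hd.le, abs_nonneg (l2 * s.1.1 + (-a1) * s.1.1 + (-a2) * s.1.2)]

lemma abs_B1_le (a1 a2 a3 a4 : ℝ) {l1 l2 : ℝ} (h : l1 ≠ l2) (hgt : |l2| ≤ |l1|) (j : ℕ)
    (s : Sphere2) : |B1 a1 a2 a3 a4 l1 l2 j s| ≤ Kc a1 a2 a3 a4 l1 l2 * |l1| ^ j := by
  have hd : (0:ℝ) < |l2 - l1| := abs_pos.2 (sub_ne_zero.2 (Ne.symm h))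
  have e : B1 a1 a2 a3 a4 l1 l2 j s
      = l2 ^ j * ((-l1) * s.1.1 + a1 * s.1.1 + a2 * s.1.2) / (l2 - l1) := by
    rw [B1]; ring
  have hinner : |(-l1) * s.1.1 + a1 * s.1.1 + a2 * s.1.2| ≤ |l1| + |a1| + |a2| := by
    simpa [abs_neg] using abs_lin3 (p := -l1) (q := a1) (r := a2)
      (sphere_abs_fst s) (sphere_abs_fst s) (sphere_abs_snd s)
  have hpw : |l2| ^ j ≤ |l1| ^ j := pow_le_pow_left₀ (abs_nonneg l2) hgt j
  have hX : |l2| ^ j * |(-l1) * s.1.1 + a1 * s.1.1 + a2 * s.1.2|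
      ≤ (2 * (|l1| + |l2| + |a1| + |a2| + |a3| + |a4|) + 2) * |l1| ^ j := by
    have h1 : |l1| + |a1| + |a2| ≤ 2 * (|l1| + |l2| + |a1| + |a2| + |a3| + |a4|) + 2 := by
      have := abs_nonneg l1; have := abs_nonneg l2; have := abs_nonneg a1
      have := abs_nonneg a2; have := abs_nonneg a3; have := abs_nonneg a4
      linarith
    calc |l2| ^ j * |(-l1) * s.1.1 + a1 * s.1.1 + a2 * s.1.2|
        ≤ |l1| ^ j * (2 * (|l1| + |l2| + |a1| + |a2| + |a3| + |a4|) + 2) := by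
          apply mul_le_mul hpw (hinner.trans h1) (abs_nonneg _) (by positivity)
      _ = _ := mul_comm _ _
  rw [e, abs_div, abs_mul, abs_pow, Kc, div_mul_eq_mul_div, div_le_div_iff₀ hd hd]
  nlinarith [hd.le, abs_nonneg ((-l1) * s.1.1 + a1 * s.1.1 + a2 * s.1.2)]

lemma abs_C1_le (a1 a2 a3 a4 : ℝ) {l1 l2 : ℝ} (h : l1 ≠ l2) (hgt : |l2| ≤ |l1|) (j : ℕ)
    (s : Sphere2) : |C1 a1 a2 a3 a4 l1 l2 j s| ≤ Kc a1 a2 a3 a4 l1 l2 * |l1| ^ j := by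
  have hd : (0:ℝ) < |l2 - l1| := abs_pos.2 (sub_ne_zero.2 (Ne.symm h))
  have e : C1 a1 a2 a3 a4 l1 l2 j s
      = (l1 ^ j * ((-a3) * s.1.1 + l2 * s.1.2 + (-a4) * s.1.2)
        + l2 ^ j * (a3 * s.1.1 + (-l1) * s.1.2 + a4 * s.1.2)) / (l2 - l1) := by
    rw [C1]; ring
  have hin1 : |(-a3) * s.1.1 + l2 * s.1.2 + (-a4) * s.1.2| ≤ |a3| + |l2| + |a4| := by
    simpa [abs_neg] using abs_lin3 (p := -a3) (q := l2) (r := -a4)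
      (sphere_abs_fst s) (sphere_abs_snd s) (sphere_abs_snd s)
  have hin2 : |a3 * s.1.1 + (-l1) * s.1.2 + a4 * s.1.2| ≤ |a3| + |l1| + |a4| := by
    simpa [abs_neg] using abs_lin3 (p := a3) (q := -l1) (r := a4)
      (sphere_abs_fst s) (sphere_abs_snd s) (sphere_abs_snd s)
  have hpw : |l2| ^ j ≤ |l1| ^ j := pow_le_pow_left₀ (abs_nonneg l2) hgt j
  have hX : |l1 ^ j * ((-a3) * s.1.1 + l2 * s.1.2 + (-a4) * s.1.2)
        + l2 ^ j * (a3 * s.1.1 + (-l1) * s.1.2 + a4 * s.1.2)|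
      ≤ (2 * (|l1| + |l2| + |a1| + |a2| + |a3| + |a4|) + 2) * |l1| ^ j := by
    have hjn : (0:ℝ) ≤ |l1| ^ j := by positivity
    have hjn2 : (0:ℝ) ≤ |l2| ^ j := by positivity
    calc |l1 ^ j * ((-a3) * s.1.1 + l2 * s.1.2 + (-a4) * s.1.2)
          + l2 ^ j * (a3 * s.1.1 + (-l1) * s.1.2 + a4 * s.1.2)|
        ≤ |l1 ^ j * ((-a3) * s.1.1 + l2 * s.1.2 + (-a4) * s.1.2)|
          + |l2 ^ j * (a3 * s.1.1 + (-l1) * s.1.2 + a4 * s.1.2)| := abs_add_le _ _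
      _ = |l1| ^ j * |(-a3) * s.1.1 + l2 * s.1.2 + (-a4) * s.1.2|
          + |l2| ^ j * |a3 * s.1.1 + (-l1) * s.1.2 + a4 * s.1.2| := by
          rw [abs_mul, abs_mul, abs_pow, abs_pow]
      _ ≤ |l1| ^ j * (|a3| + |l2| + |a4|) + |l1| ^ j * (|a3| + |l1| + |a4|) := by
          have b1 := mul_le_mul_of_nonneg_left hin1 hjn
          have b2 := mul_le_mul hpw hin2 (abs_nonneg _) hjn
          linarith
      _ ≤ (2 * (|l1| + |l2| + |a1| + |a2| + |a3| + |a4|) + 2) * |l1| ^ j := by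
          have ha1 := abs_nonneg a1; have ha2 := abs_nonneg a2
          have hcoef : (|a3| + |l2| + |a4|) + (|a3| + |l1| + |a4|)
              ≤ 2 * (|l1| + |l2| + |a1| + |a2| + |a3| + |a4|) + 2 := by
            have := abs_nonneg l1; have := abs_nonneg l2
            have := abs_nonneg a3; have := abs_nonneg a4
            linarith
          linarith [mul_le_mul_of_nonneg_left hcoef hjn]
  rw [e, abs_div, Kc, div_mul_eq_mul_div, div_le_div_iff₀ hd hd]
  nlinarith [hd.le, abs_nonneg (l1 ^ j * ((-a3) * s.1.1 + l2 * s.1.2 + (-a4) * s.1.2)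
    + l2 ^ j * (a3 * s.1.1 + (-l1) * s.1.2 + a4 * s.1.2))]

/- ### The integrand and its properties -/

noncomputable def Xh (a1 a2 a3 a4 l1 l2 : ℝ) (h j : ℕ) (s : Sphere2) : ℝ :=
  l1 ^ h * A1 a1 a2 a3 a4 l1 l2 j s + l2 ^ h * B1 a1 a2 a3 a4 l1 l2 j s

noncomputable def Fh (α a1 a2 a3 a4 l1 l2 : ℝ) (h j : ℕ) (s : Sphere2) : ℝ :=
  |Xh a1 a2 a3 a4 l1 l2 h j s| ^ α + |C1 a1 a2 a3 a4 l1 l2 j s| ^ α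
    - |C1 a1 a2 a3 a4 l1 l2 j s - Xh a1 a2 a3 a4 l1 l2 h j s| ^ α

lemma abs_Xh_le (a1 a2 a3 a4 : ℝ) {l1 l2 : ℝ} (h : l1 ≠ l2) (hgt : |l2| ≤ |l1|) (hh j : ℕ)
    (s : Sphere2) :
    |Xh a1 a2 a3 a4 l1 l2 hh j s| ≤ 2 * Kc a1 a2 a3 a4 l1 l2 * |l1| ^ j * |l1| ^ hh := by
  have hK := (Kc_pos a1 a2 a3 a4 h).le
  have hpw : |l2| ^ hh ≤ |l1| ^ hh := pow_le_pow_left₀ (abs_nonneg l2) hgt hh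
  calc |Xh a1 a2 a3 a4 l1 l2 hh j s|
      ≤ |l1 ^ hh * A1 a1 a2 a3 a4 l1 l2 j s| + |l2 ^ hh * B1 a1 a2 a3 a4 l1 l2 j s| :=
        abs_add_le _ _
    _ = |l1| ^ hh * |A1 a1 a2 a3 a4 l1 l2 j s| + |l2| ^ hh * |B1 a1 a2 a3 a4 l1 l2 j s| := by
        rw [abs_mul, abs_mul, abs_pow, abs_pow]
    _ ≤ |l1| ^ hh * (Kc a1 a2 a3 a4 l1 l2 * |l1| ^ j)
        + |l1| ^ hh * (Kc a1 a2 a3 a4 l1 l2 * |l1| ^ j) := by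
        have b1 := mul_le_mul_of_nonneg_left (abs_A1_le a1 a2 a3 a4 h j s) (pow_nonneg (abs_nonneg l1) hh)
        have b2 := mul_le_mul hpw (abs_B1_le a1 a2 a3 a4 h hgt j s) (abs_nonneg _)
          (pow_nonneg (abs_nonneg l1) hh)
        linarith
    _ = 2 * Kc a1 a2 a3 a4 l1 l2 * |l1| ^ j * |l1| ^ hh := by ring

lemma F_sub_main_le {α a1 a2 a3 a4 l1 l2 : ℝ} (hα1 : 1 < α) (hα2 : α ≤ 2) (h j : ℕ)
    (s : Sphere2) :
    |Fh α a1 a2 a3 a4 l1 l2 h j s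
      - α * spow (C1 a1 a2 a3 a4 l1 l2 j s) (α - 1) * Xh a1 a2 a3 a4 l1 l2 h j s|
    ≤ (2 * α + 1) * |Xh a1 a2 a3 a4 l1 l2 h j s| ^ α := by
  have k := key_ineq hα1 hα2 (C1 a1 a2 a3 a4 l1 l2 j s) (Xh a1 a2 a3 a4 l1 l2 h j s)
  have e : Fh α a1 a2 a3 a4 l1 l2 h j s
      - α * spow (C1 a1 a2 a3 a4 l1 l2 j s) (α - 1) * Xh a1 a2 a3 a4 l1 l2 h j s
      = |Xh a1 a2 a3 a4 l1 l2 h j s| ^ α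
        + (|C1 a1 a2 a3 a4 l1 l2 j s| ^ α
          - |C1 a1 a2 a3 a4 l1 l2 j s - Xh a1 a2 a3 a4 l1 l2 h j s| ^ α
          - α * spow (C1 a1 a2 a3 a4 l1 l2 j s) (α - 1) * Xh a1 a2 a3 a4 l1 l2 h j s) := by
    rw [Fh]; ring
  rw [e]
  calc |_ + _| ≤ abs (|Xh a1 a2 a3 a4 l1 l2 h j s| ^ α)
      + |(|C1 a1 a2 a3 a4 l1 l2 j s| ^ α
          - |C1 a1 a2 a3 a4 l1 l2 j s - Xh a1 a2 a3 a4 l1 l2 h j s| ^ α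
          - α * spow (C1 a1 a2 a3 a4 l1 l2 j s) (α - 1) * Xh a1 a2 a3 a4 l1 l2 h j s)| :=
        abs_add_le _ _
    _ ≤ |Xh a1 a2 a3 a4 l1 l2 h j s| ^ α + 2 * α * |Xh a1 a2 a3 a4 l1 l2 h j s| ^ α := by
        rw [abs_of_nonneg (Real.rpow_nonneg (abs_nonneg _) α)]
        exact add_le_add le_rfl k
    _ = (2 * α + 1) * |Xh a1 a2 a3 a4 l1 l2 h j s| ^ α := by ring

lemma continuous_sphere_fst : Continuous fun s : Sphere2 => s.1.1 :=
  continuous_subtype_val.fst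

lemma continuous_sphere_snd : Continuous fun s : Sphere2 => s.1.2 :=
  continuous_subtype_val.snd

lemma continuous_A1 (a1 a2 a3 a4 l1 l2 : ℝ) (j : ℕ) :
    Continuous fun s => A1 a1 a2 a3 a4 l1 l2 j s := by
  unfold A1
  fun_prop

lemma continuous_B1 (a1 a2 a3 a4 l1 l2 : ℝ) (j : ℕ) :
    Continuous fun s => B1 a1 a2 a3 a4 l1 l2 j s := by
  unfold B1
  fun_prop

lemma continuous_C1 (a1 a2 a3 a4 l1 l2 : ℝ) (j : ℕ) :
    Continuous fun s => C1 a1 a2 a3 a4 l1 l2 j s := by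
  unfold C1
  fun_prop

lemma continuous_Xh (a1 a2 a3 a4 l1 l2 : ℝ) (h j : ℕ) :
    Continuous fun s => Xh a1 a2 a3 a4 l1 l2 h j s := by
  unfold Xh
  exact (continuous_const.mul (continuous_A1 a1 a2 a3 a4 l1 l2 j)).add
    (continuous_const.mul (continuous_B1 a1 a2 a3 a4 l1 l2 j))

lemma continuous_Fh {α : ℝ} (hα : 0 ≤ α) (a1 a2 a3 a4 l1 l2 : ℝ) (h j : ℕ) :
    Continuous fun s => Fh α a1 a2 a3 a4 l1 l2 h j s := by
  unfold Fh
  exact (((continuous_abs_rpow hα).comp (continuous_Xh a1 a2 a3 a4 l1 l2 h j)).add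
    ((continuous_abs_rpow hα).comp (continuous_C1 a1 a2 a3 a4 l1 l2 j))).sub
    ((continuous_abs_rpow hα).comp ((continuous_C1 a1 a2 a3 a4 l1 l2 j).sub
      (continuous_Xh a1 a2 a3 a4 l1 l2 h j)))

/-- The cross-codifference `CD(X₁(t), X₂(t-h))` of the bidimensional α-stable AR(1) model. -/
noncomputable def CDneg (Γ : Measure Sphere2) (α a1 a2 a3 a4 l1 l2 : ℝ) (h : ℕ) : ℝ :=
  ∑' j : ℕ, ∫ s,
    (|l1 ^ h * A1 a1 a2 a3 a4 l1 l2 j s + l2 ^ h * B1 a1 a2 a3 a4 l1 l2 j s| ^ α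
      + |C1 a1 a2 a3 a4 l1 l2 j s| ^ α
      - |C1 a1 a2 a3 a4 l1 l2 j s - (l1 ^ h * A1 a1 a2 a3 a4 l1 l2 j s + l2 ^ h * B1 a1 a2 a3 a4 l1 l2 j s)| ^ α) ∂Γ

/-- The cross-covariation `CV(X₁(t), X₂(t-h))` of the bidimensional α-stable AR(1) model. -/
noncomputable def CVneg (Γ : Measure Sphere2) (α a1 a2 a3 a4 l1 l2 : ℝ) (h : ℕ) : ℝ :=
  ∑' j : ℕ, ∫ s,
    spow (C1 a1 a2 a3 a4 l1 l2 j s) (α - 1) * (l1 ^ h * A1 a1 a2 a3 a4 l1 l2 j s + l2 ^ h * B1 a1 a2 a3 a4 l1 l2 j s) ∂Γ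

noncomputable def D1 (Γ : Measure Sphere2) (α a1 a2 a3 a4 l1 l2 : ℝ) : ℝ :=
  ∑' j : ℕ, ∫ s, A1 a1 a2 a3 a4 l1 l2 j s * spow (C1 a1 a2 a3 a4 l1 l2 j s) (α - 1) ∂Γ

noncomputable def D2 (Γ : Measure Sphere2) (α a1 a2 a3 a4 l1 l2 : ℝ) : ℝ :=
  ∑' j : ℕ, ∫ s, B1 a1 a2 a3 a4 l1 l2 j s * spow (C1 a1 a2 a3 a4 l1 l2 j s) (α - 1) ∂Γ

theorem CD_neg_asymptotic_case_I
    (Γ : Measure Sphere2) [IsFiniteMeasure Γ]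
    (α a1 a2 a3 a4 l1 l2 : ℝ) (hα1 : 1 < α) (hα2 : α < 2)
    (hl1 : l1 ^ 2 - (a1 + a4) * l1 + (a1 * a4 - a2 * a3) = 0)
    (hl2 : l2 ^ 2 - (a1 + a4) * l2 + (a1 * a4 - a2 * a3) = 0)
    (hne : l1 ≠ l2) (habs1 : |l1| < 1) (habs2 : |l2| < 1)
    (hgt : |l2| < |l1|) :
    Tendsto (fun h : ℕ => CDneg Γ α a1 a2 a3 a4 l1 l2 h / l1 ^ h) atTop
      (𝓝 (α * D1 Γ α a1 a2 a3 a4 l1 l2)) := by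
  have hα0 : (0:ℝ) < α := by linarith
  have hαnn : (0:ℝ) ≤ α := hα0.le
  have hρ0 : (0:ℝ) < |l1| := lt_of_le_of_lt (abs_nonneg l2) hgt
  have hl1ne : l1 ≠ 0 := abs_pos.1 hρ0
  have hβ0 : (0:ℝ) < α - 1 := by linarith
  have hK0 : 0 < Kc a1 a2 a3 a4 l1 l2 := Kc_pos a1 a2 a3 a4 hne
  have hlh : ∀ h : ℕ, (0:ℝ) < |l1| ^ h := fun h => pow_pos hρ0 h
  have hKj : ∀ j : ℕ, (0:ℝ) < 2 * Kc a1 a2 a3 a4 l1 l2 * |l1| ^ j :=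
    fun j => mul_pos (mul_pos two_pos hK0) (hlh j)
  have hKj' : ∀ j : ℕ, (0:ℝ) < Kc a1 a2 a3 a4 l1 l2 * |l1| ^ j := fun j => mul_pos hK0 (hlh j)
  set Cj : ℕ → ℝ := fun j => (2 * α + 1) * (2 * Kc a1 a2 a3 a4 l1 l2 * |l1| ^ j) ^ α
      + α * (Kc a1 a2 a3 a4 l1 l2 * |l1| ^ j) ^ (α - 1) * (2 * Kc a1 a2 a3 a4 l1 l2 * |l1| ^ j) with hCjdef
  -- pointwise bound on the integrand
  have hF_bound : ∀ (h j : ℕ) (s : Sphere2), |Fh α a1 a2 a3 a4 l1 l2 h j s| ≤ Cj j * |l1| ^ h := by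
    intro h j s
    have hx := abs_Xh_le a1 a2 a3 a4 hne hgt.le h j s
    have hxa : |Xh a1 a2 a3 a4 l1 l2 h j s| ^ α ≤ (2 * Kc a1 a2 a3 a4 l1 l2 * |l1| ^ j) ^ α * |l1| ^ h := by
      have h1 : |Xh a1 a2 a3 a4 l1 l2 h j s| ^ α ≤ (2 * Kc a1 a2 a3 a4 l1 l2 * |l1| ^ j * |l1| ^ h) ^ α :=
        Real.rpow_le_rpow (abs_nonneg _) hx hαnn
      have h2 : (2 * Kc a1 a2 a3 a4 l1 l2 * |l1| ^ j * |l1| ^ h) ^ α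
          = (2 * Kc a1 a2 a3 a4 l1 l2 * |l1| ^ j) ^ α * (|l1| ^ h) ^ α :=
        Real.mul_rpow (hKj j).le (hlh h).le
      have h3 : ((|l1|:ℝ) ^ h) ^ α ≤ |l1| ^ h := by
        have e1 : ((|l1|:ℝ) ^ h) ^ α = ((|l1|:ℝ) ^ h) ^ (α - 1) * |l1| ^ h := by
          rw [← Real.rpow_add_one (hlh h).ne']
          norm_num
        have h4 : ((|l1|:ℝ) ^ h) ^ (α - 1) ≤ 1 :=
          Real.rpow_le_one (hlh h).le (pow_le_one₀ (abs_nonneg l1) habs1.le) hβ0.le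
        rw [e1]
        nlinarith [(hlh h).le]
      calc |Xh a1 a2 a3 a4 l1 l2 h j s| ^ α ≤ (2 * Kc a1 a2 a3 a4 l1 l2 * |l1| ^ j) ^ α * (|l1| ^ h) ^ α := by rw [← h2]; exact h1
        _ ≤ (2 * Kc a1 a2 a3 a4 l1 l2 * |l1| ^ j) ^ α * |l1| ^ h :=
            mul_le_mul_of_nonneg_left h3 (Real.rpow_nonneg (hKj j).le α)
    have hc := abs_C1_le a1 a2 a3 a4 hne hgt.le j s
    have hsp : |spow (C1 a1 a2 a3 a4 l1 l2 j s) (α - 1)| ≤ (Kc a1 a2 a3 a4 l1 l2 * |l1| ^ j) ^ (α - 1) :=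
      (abs_spow_le _ _).trans (Real.rpow_le_rpow (abs_nonneg _) hc hβ0.le)
    have hsub : |Fh α a1 a2 a3 a4 l1 l2 h j s - α * spow (C1 a1 a2 a3 a4 l1 l2 j s) (α - 1) * Xh a1 a2 a3 a4 l1 l2 h j s| ≤ (2 * α + 1) * |Xh a1 a2 a3 a4 l1 l2 h j s| ^ α :=
      F_sub_main_le hα1 hα2.le h j s
    have hmainb : |α * spow (C1 a1 a2 a3 a4 l1 l2 j s) (α - 1) * Xh a1 a2 a3 a4 l1 l2 h j s|
        ≤ α * (Kc a1 a2 a3 a4 l1 l2 * |l1| ^ j) ^ (α - 1) * (2 * Kc a1 a2 a3 a4 l1 l2 * |l1| ^ j) * |l1| ^ h := by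
      rw [abs_mul, abs_mul, abs_of_pos hα0]
      calc α * |spow (C1 a1 a2 a3 a4 l1 l2 j s) (α - 1)| * |Xh a1 a2 a3 a4 l1 l2 h j s|
          ≤ α * (Kc a1 a2 a3 a4 l1 l2 * |l1| ^ j) ^ (α - 1) * (2 * Kc a1 a2 a3 a4 l1 l2 * |l1| ^ j * |l1| ^ h) :=
            mul_le_mul (mul_le_mul_of_nonneg_left hsp hα0.le) hx (abs_nonneg _)
              (by positivity)
        _ = α * (Kc a1 a2 a3 a4 l1 l2 * |l1| ^ j) ^ (α - 1) * (2 * Kc a1 a2 a3 a4 l1 l2 * |l1| ^ j) * |l1| ^ h := by ring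
    have habs : |Fh α a1 a2 a3 a4 l1 l2 h j s| ≤ |Fh α a1 a2 a3 a4 l1 l2 h j s - α * spow (C1 a1 a2 a3 a4 l1 l2 j s) (α - 1) * Xh a1 a2 a3 a4 l1 l2 h j s|
        + |α * spow (C1 a1 a2 a3 a4 l1 l2 j s) (α - 1) * Xh a1 a2 a3 a4 l1 l2 h j s| := by
      calc |Fh α a1 a2 a3 a4 l1 l2 h j s| = |(Fh α a1 a2 a3 a4 l1 l2 h j s - α * spow (C1 a1 a2 a3 a4 l1 l2 j s) (α - 1) * Xh a1 a2 a3 a4 l1 l2 h j s)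
          + α * spow (C1 a1 a2 a3 a4 l1 l2 j s) (α - 1) * Xh a1 a2 a3 a4 l1 l2 h j s| := by ring_nf
        _ ≤ _ := abs_add_le _ _
    have hmul := mul_le_mul_of_nonneg_left hxa (by linarith : (0:ℝ) ≤ 2 * α + 1)
    calc |Fh α a1 a2 a3 a4 l1 l2 h j s| ≤ (2 * α + 1) * |Xh a1 a2 a3 a4 l1 l2 h j s| ^ α + |α * spow (C1 a1 a2 a3 a4 l1 l2 j s) (α - 1) * Xh a1 a2 a3 a4 l1 l2 h j s| := by
          linarith [hsub, habs]
      _ ≤ (2 * α + 1) * ((2 * Kc a1 a2 a3 a4 l1 l2 * |l1| ^ j) ^ α * |l1| ^ h)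
          + α * (Kc a1 a2 a3 a4 l1 l2 * |l1| ^ j) ^ (α - 1) * (2 * Kc a1 a2 a3 a4 l1 l2 * |l1| ^ j) * |l1| ^ h := by
          linarith [hmul, hmainb]
      _ = Cj j * |l1| ^ h := by rw [hCjdef]; ring
  -- per-j convergence of the integrals
  have hlim : ∀ j : ℕ,
      Tendsto (fun h : ℕ => ∫ s, Fh α a1 a2 a3 a4 l1 l2 h j s / l1 ^ h ∂Γ) atTop
        (𝓝 (∫ s, α * (A1 a1 a2 a3 a4 l1 l2 j s * spow (C1 a1 a2 a3 a4 l1 l2 j s) (α - 1)) ∂Γ)) := by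
    intro j
    refine tendsto_integral_of_dominated_convergence (fun _ => Cj j) ?_ ?_ ?_ ?_
    · intro h
      haveI : OpensMeasurableSpace Sphere2 :=
        Subtype.opensMeasurableSpace {s : ℝ × ℝ | s.1 ^ 2 + s.2 ^ 2 = 1}
      exact ((continuous_Fh hαnn a1 a2 a3 a4 l1 l2 h j).div_const _).aestronglyMeasurable
    · exact integrable_const _
    · intro h
      refine Eventually.of_forall fun s => ?_
      rw [Real.norm_eq_abs, abs_div, abs_pow, div_le_iff₀ (hlh h)]
      exact hF_bound h j s
    · refine Eventually.of_forall fun s => ?_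
      have hdecomp : ∀ h : ℕ, Fh α a1 a2 a3 a4 l1 l2 h j s / l1 ^ h =
          α * spow (C1 a1 a2 a3 a4 l1 l2 j s) (α - 1) * (A1 a1 a2 a3 a4 l1 l2 j s + (l2 / l1) ^ h * B1 a1 a2 a3 a4 l1 l2 j s)
          + (Fh α a1 a2 a3 a4 l1 l2 h j s - α * spow (C1 a1 a2 a3 a4 l1 l2 j s) (α - 1) * Xh a1 a2 a3 a4 l1 l2 h j s) / l1 ^ h := by
        intro h
        have hpne : (l1:ℝ) ^ h ≠ 0 := pow_ne_zero _ hl1ne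
        have hX : Xh a1 a2 a3 a4 l1 l2 h j s = l1 ^ h * A1 a1 a2 a3 a4 l1 l2 j s + l2 ^ h * B1 a1 a2 a3 a4 l1 l2 j s := rfl
        rw [hX, div_pow]
        field_simp
        ring
      have t1 : Tendsto (fun h : ℕ => (l2 / l1) ^ h) atTop (𝓝 0) := by
        apply tendsto_pow_atTop_nhds_zero_of_abs_lt_one
        rw [abs_div]
        exact (div_lt_one hρ0).2 hgt
      have t2 : Tendsto (fun h : ℕ =>
          α * spow (C1 a1 a2 a3 a4 l1 l2 j s) (α - 1) * (A1 a1 a2 a3 a4 l1 l2 j s + (l2 / l1) ^ h * B1 a1 a2 a3 a4 l1 l2 j s)) atTop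
          (𝓝 (α * spow (C1 a1 a2 a3 a4 l1 l2 j s) (α - 1) * (A1 a1 a2 a3 a4 l1 l2 j s + 0 * B1 a1 a2 a3 a4 l1 l2 j s))) :=
        tendsto_const_nhds.mul (tendsto_const_nhds.add (t1.mul_const _))
      have t3 : Tendsto (fun h : ℕ =>
          (Fh α a1 a2 a3 a4 l1 l2 h j s - α * spow (C1 a1 a2 a3 a4 l1 l2 j s) (α - 1) * Xh a1 a2 a3 a4 l1 l2 h j s) / l1 ^ h) atTop (𝓝 0) := by
        apply squeeze_zero_norm
          (a := fun h : ℕ => (2 * α + 1) * (2 * Kc a1 a2 a3 a4 l1 l2 * |l1| ^ j) ^ α * (|l1| ^ (α - 1)) ^ h)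
        · intro h
          rw [Real.norm_eq_abs, abs_div, abs_pow, div_le_iff₀ (hlh h)]
          have hsub : |Fh α a1 a2 a3 a4 l1 l2 h j s - α * spow (C1 a1 a2 a3 a4 l1 l2 j s) (α - 1) * Xh a1 a2 a3 a4 l1 l2 h j s| ≤ (2 * α + 1) * |Xh a1 a2 a3 a4 l1 l2 h j s| ^ α :=
            F_sub_main_le hα1 hα2.le h j s
          have hxa2 : |Xh a1 a2 a3 a4 l1 l2 h j s| ^ α
              ≤ (2 * Kc a1 a2 a3 a4 l1 l2 * |l1| ^ j) ^ α * ((|l1| ^ (α - 1)) ^ h * |l1| ^ h) := by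
            have h1 := Real.rpow_le_rpow (abs_nonneg _)
              (abs_Xh_le a1 a2 a3 a4 hne hgt.le h j s) hαnn
            rw [Real.mul_rpow (hKj j).le (hlh h).le] at h1
            have e2 : ((|l1|:ℝ) ^ h) ^ α = (|l1| ^ (α - 1)) ^ h * |l1| ^ h := by
              rw [← pow_rpow_comm (abs_nonneg l1) h (α - 1),
                ← Real.rpow_add_one (hlh h).ne']
              norm_num
            rwa [e2] at h1
          calc |Fh α a1 a2 a3 a4 l1 l2 h j s - α * spow (C1 a1 a2 a3 a4 l1 l2 j s) (α - 1) * Xh a1 a2 a3 a4 l1 l2 h j s| ≤ (2 * α + 1) * |Xh a1 a2 a3 a4 l1 l2 h j s| ^ α := hsub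
            _ ≤ (2 * α + 1) * ((2 * Kc a1 a2 a3 a4 l1 l2 * |l1| ^ j) ^ α * ((|l1| ^ (α - 1)) ^ h * |l1| ^ h)) :=
                mul_le_mul_of_nonneg_left hxa2 (by linarith)
            _ = (2 * α + 1) * (2 * Kc a1 a2 a3 a4 l1 l2 * |l1| ^ j) ^ α * (|l1| ^ (α - 1)) ^ h * |l1| ^ h := by
                ring
        · have hr1 : (0:ℝ) ≤ |l1| ^ (α - 1) := Real.rpow_nonneg (abs_nonneg l1) _
          have hr2 : |l1| ^ (α - 1) < 1 := Real.rpow_lt_one (abs_nonneg l1) habs1 hβ0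
          simpa using (tendsto_pow_atTop_nhds_zero_of_lt_one hr1 hr2).const_mul
            ((2 * α + 1) * (2 * Kc a1 a2 a3 a4 l1 l2 * |l1| ^ j) ^ α)
      have heq : α * spow (C1 a1 a2 a3 a4 l1 l2 j s) (α - 1) * (A1 a1 a2 a3 a4 l1 l2 j s + 0 * B1 a1 a2 a3 a4 l1 l2 j s) + 0
          = α * (A1 a1 a2 a3 a4 l1 l2 j s * spow (C1 a1 a2 a3 a4 l1 l2 j s) (α - 1)) := by ring
      rw [← heq]
      exact Tendsto.congr (fun h => (hdecomp h).symm) (t2.add t3)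
  -- summability of the bound
  have hsummableCj : Summable (fun j : ℕ => Cj j * (Γ Set.univ).toReal) := by
    apply Summable.mul_right
    rw [hCjdef]
    apply Summable.add
    · have e : ∀ j : ℕ, (2 * α + 1) * (2 * Kc a1 a2 a3 a4 l1 l2 * |l1| ^ j) ^ α
          = ((2 * α + 1) * (2 * Kc a1 a2 a3 a4 l1 l2) ^ α) * ((|l1| ^ α) ^ j) := by
        intro j
        rw [Real.mul_rpow (by linarith [hK0] : (0:ℝ) ≤ 2 * Kc a1 a2 a3 a4 l1 l2) (hlh j).le,
          pow_rpow_comm (abs_nonneg l1)]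
        ring
      exact Summable.congr ((summable_geometric_of_lt_one
        (Real.rpow_nonneg (abs_nonneg l1) α)
        (Real.rpow_lt_one (abs_nonneg l1) habs1 hα0)).mul_left _) (fun j => (e j).symm)
    · have e : ∀ j : ℕ, α * (Kc a1 a2 a3 a4 l1 l2 * |l1| ^ j) ^ (α - 1) * (2 * Kc a1 a2 a3 a4 l1 l2 * |l1| ^ j)
          = (2 * α * Kc a1 a2 a3 a4 l1 l2 ^ (α - 1) * Kc a1 a2 a3 a4 l1 l2) * ((|l1| ^ (α - 1) * |l1|) ^ j) := by
        intro j
        rw [Real.mul_rpow hK0.le (hlh j).le, pow_rpow_comm (abs_nonneg l1), mul_pow]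
        ring
      have hr0 : (0:ℝ) ≤ |l1| ^ (α - 1) * |l1| :=
        mul_nonneg (Real.rpow_nonneg (abs_nonneg l1) _) (abs_nonneg l1)
      have hr1 : |l1| ^ (α - 1) * |l1| < 1 := by
        have h1 : |l1| ^ (α - 1) ≤ 1 :=
          Real.rpow_le_one (abs_nonneg l1) habs1.le hβ0.le
        nlinarith [hρ0, Real.rpow_nonneg (abs_nonneg l1) (α - 1)]
      exact Summable.congr ((summable_geometric_of_lt_one hr0 hr1).mul_left _)
        (fun j => (e j).symm)
  -- bound on the integrals
  have hbd : ∀ (h j : ℕ),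
      ‖∫ s, Fh α a1 a2 a3 a4 l1 l2 h j s / l1 ^ h ∂Γ‖ ≤ Cj j * (Γ Set.univ).toReal := by
    intro h j
    apply norm_integral_le_of_norm_le_const
    refine Eventually.of_forall fun s => ?_
    rw [Real.norm_eq_abs, abs_div, abs_pow, div_le_iff₀ (hlh h)]
    exact hF_bound h j s
  have hmain := tendsto_tsum_of_dominated_convergence hsummableCj hlim
    (Eventually.of_forall hbd)
  have e1 : ∀ h : ℕ, CDneg Γ α a1 a2 a3 a4 l1 l2 h / l1 ^ h
      = ∑' j : ℕ, ∫ s, Fh α a1 a2 a3 a4 l1 l2 h j s / l1 ^ h ∂Γ := by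
    intro h
    rw [CDneg, ← tsum_div_const]
    exact tsum_congr fun j => by rw [← integral_div]; simp only [Fh, Xh]
  have e2 : α * D1 Γ α a1 a2 a3 a4 l1 l2
      = ∑' j : ℕ, ∫ s, α * (A1 a1 a2 a3 a4 l1 l2 j s
          * spow (C1 a1 a2 a3 a4 l1 l2 j s) (α - 1)) ∂Γ := by
    rw [D1, ← tsum_mul_left]
    exact tsum_congr fun j => (integral_const_mul α _).symm
  rw [e2]
  exact Tendsto.congr (fun h => (e1 h).symm) hmain
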